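/- Fix c > 0. The function x ↦ R_c(x) - c/(x(c-x)), where R_c(x) = -ψ(x) - ψ(c-x) - 2γ, is strictly decreasing on (0, c/2) and strictly increasing on (c/2, c), with limits -ψ(1+c) - γ as x → 0⁺ and as x → c⁻, and value -2ψ(c/2) - 2γ - 4/c at x = c/2. -/

import Mathlib

noncomputable def digamma (x : ℝ) : ℝ := deriv (fun y : ℝ => Real.log (Real.Gamma y)) x

noncomputable def Bc (c x : ℝ) : ℝ := Real.Gamma x * Real.Gamma (c - x) / Real.Gamma c

noncomputable def Rc (c x : ℝ) : ℝ :=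
  -digamma x - digamma (c - x) - 2 * Real.eulerMascheroniConstant

/-!
On `(0, c)` the recurrence `ψ (x + 1) = ψ x + 1 / x` absorbs the pole term:
`R_c x - c / (x (c - x)) = -ψ (1 + x) - ψ (1 + (c - x)) - 2γ`. Telescoping the recurrence gives
`ψ b - ψ a = ∑ₙ (1 / (n + a) - 1 / (n + b))`, a series of strictly concave functions of `b`, so
`ψ` is strictly concave, hence continuous, on `(0, ∞)`. The right-hand side is therefore strictly
convex on `(0, c)` and symmetric about `c / 2`, which gives the monotonicity, and continuous on
`[0, c]`, which gives the one-sided limits.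
-/

open Real Filter Topology Set

lemma hasDerivAt_log_Gamma {x : ℝ} (hx : 0 < x) :
    HasDerivAt (fun y => log (Gamma y)) (digamma x) x :=
  ((differentiableAt_Gamma fun m => ((neg_nonpos.2 m.cast_nonneg).trans_lt hx).ne').log
    (Gamma_pos_of_pos hx).ne').hasDerivAt

lemma digamma_one : digamma 1 = -eulerMascheroniConstant :=
  (hasDerivAt_Gamma_one.log (by simp [Gamma_one])).deriv.trans (by rw [Gamma_one, div_one])

lemma digamma_add_one {x : ℝ} (hx : 0 < x) : digamma (x + 1) = digamma x + x⁻¹ := by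
  have hshift : HasDerivAt (fun y => log (Gamma (y + 1))) (digamma (x + 1)) x := by
    simpa using (hasDerivAt_log_Gamma (by linarith : 0 < x + 1)).comp_add_const x 1
  have hsplit : (fun y => log (Gamma (y + 1))) =ᶠ[𝓝 x] fun y => log (Gamma y) + log y := by
    filter_upwards [eventually_gt_nhds hx] with y hy
    rw [Gamma_add_one hy.ne', log_mul hy.ne' (Gamma_pos_of_pos hy).ne', add_comm]
  exact hshift.unique (((hasDerivAt_log_Gamma hx).add (hasDerivAt_log hx.ne')).congr_of_eventuallyEq
    hsplit)

lemma digamma_add_nat {x : ℝ} (hx : 0 < x) (N : ℕ) :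
    digamma (x + N) = digamma x + ∑ k ∈ Finset.range N, (x + k)⁻¹ := by
  induction N with
  | zero => simp
  | succ n ih =>
    rw [Nat.cast_succ, ← add_assoc, digamma_add_one (by positivity), ih, Finset.sum_range_succ,
      add_assoc]

lemma monotoneOn_digamma : MonotoneOn digamma (Ioi 0) :=
  convexOn_log_Gamma.monotoneOn_deriv fun _ hx => (hasDerivAt_log_Gamma hx).differentiableAt

lemma tendsto_digamma_add_nat_sub {a b : ℝ} (ha : 0 < a) (hab : a ≤ b) :
    Tendsto (fun N : ℕ => digamma (b + N) - digamma (a + N)) atTop (𝓝 0) := by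
  let M := ⌈b - a⌉₊
  have hb : 0 < b := ha.trans_le hab
  have hpos (N : ℕ) : 0 < a + N := by positivity
  have hlower (N : ℕ) : 0 ≤ digamma (b + N) - digamma (a + N) :=
    sub_nonneg.2 (monotoneOn_digamma (hpos N) (by simp only [mem_Ioi]; positivity) (by linarith))
  have hupper (N : ℕ) :
      digamma (b + N) - digamma (a + N) ≤ ∑ k ∈ Finset.range M, (a + N + k)⁻¹ := by
    rw [sub_le_iff_le_add', ← digamma_add_nat (hpos N)]
    exact monotoneOn_digamma (by simp only [mem_Ioi]; positivity)
      (by simp only [mem_Ioi]; positivity) (by linarith [Nat.le_ceil (b - a)])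
  have hsum : Tendsto (fun N : ℕ => ∑ k ∈ Finset.range M, (a + N + k)⁻¹) atTop (𝓝 0) := by
    rw [← Finset.sum_const_zero (s := Finset.range M)]
    refine tendsto_finsetSum _ fun k _ => tendsto_inv_atTop_zero.comp ?_
    exact tendsto_atTop_add_const_right _ _ (tendsto_atTop_add_const_left _ _
      tendsto_natCast_atTop_atTop)
  exact squeeze_zero hlower hupper hsum

lemma hasSum_digamma_sub {a b : ℝ} (ha : 0 < a) (hb : 0 < b) :
    HasSum (fun n : ℕ => (n + a)⁻¹ - (n + b)⁻¹) (digamma b - digamma a) := by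
  wlog hab : a ≤ b generalizing a b
  · simpa using (this hb ha (le_of_not_ge hab)).neg
  have hterm (n : ℕ) : 0 ≤ (n + a)⁻¹ - (n + b)⁻¹ :=
    sub_nonneg.2 (inv_anti₀ (by positivity) (by linarith))
  have hpartial (N : ℕ) : ∑ n ∈ Finset.range N, ((n + a)⁻¹ - (n + b)⁻¹) =
      (digamma b - digamma a) - (digamma (b + N) - digamma (a + N)) := by
    rw [digamma_add_nat ha, digamma_add_nat hb, Finset.sum_sub_distrib]
    simp only [add_comm (a : ℝ), add_comm (b : ℝ)]
    ring
  rw [hasSum_iff_tendsto_nat_of_nonneg hterm, funext hpartial]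
  simpa using tendsto_const_nhds.sub (tendsto_digamma_add_nat_sub ha hab)

lemma StrictConcaveOn.of_hasSum {ι E : Type*} [AddCommGroup E] [Module ℝ E] {s : Set E}
    {u : ι → E → ℝ} {F : E → ℝ} (hs : Convex ℝ s) (hu : ∀ n, ConcaveOn ℝ s (u n)) {i : ι}
    (hi : StrictConcaveOn ℝ s (u i)) (hF : ∀ x ∈ s, HasSum (fun n => u n x) (F x)) :
    StrictConcaveOn ℝ s F :=
  ⟨hs, fun _ hx _ hy hxy _ _ ha hb hab =>
    hasSum_lt (fun n => (hu n).2 hx hy ha.le hb.le hab) (hi.2 hx hy hxy ha hb hab)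
      (((hF _ hx).const_smul _).add ((hF _ hy).const_smul _)) (hF _ (hs hx hy ha.le hb.le hab))⟩

lemma strictConvexOn_inv_add {n : ℝ} (hn : 0 ≤ n) :
    StrictConvexOn ℝ (Ioi 0) fun x => (n + x)⁻¹ := by
  have h := (strictConvexOn_zpow (m := -1) (by norm_num) (by norm_num)).translate_right n
  refine (h.subset (fun x hx => ?_) (convex_Ioi 0)).congr fun x _ => by simp
  exact add_pos_of_nonneg_of_pos hn hx

lemma strictConcaveOn_digamma : StrictConcaveOn ℝ (Ioi 0) digamma := by
  have hterm (n : ℕ) : StrictConcaveOn ℝ (Ioi 0) fun x : ℝ => ((n : ℝ) + 1)⁻¹ - (n + x)⁻¹ :=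
    (concaveOn_const _ (convex_Ioi 0)).sub_strictConvexOn (strictConvexOn_inv_add n.cast_nonneg)
  have h : StrictConcaveOn ℝ (Ioi 0) fun x => digamma x - digamma 1 :=
    .of_hasSum (convex_Ioi 0) (fun n => (hterm n).concaveOn) (hterm 0)
      fun x hx => hasSum_digamma_sub one_pos hx
  exact (h.add_const (digamma 1)).congr fun x _ => by simp

lemma continuousAt_digamma {x : ℝ} (hx : 0 < x) : ContinuousAt digamma x :=
  (strictConcaveOn_digamma.concaveOn.continuousOn isOpen_Ioi).continuousAt (Ioi_mem_nhds hx)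

lemma StrictConvexOn.strictAntiOn_of_symmetric {f : ℝ → ℝ} {a b : ℝ}
    (hf : StrictConvexOn ℝ (Ioo a b) f) (hsymm : ∀ x ∈ Ioo a b, f (a + b - x) = f x) :
    StrictAntiOn f (Ioc a ((a + b) / 2)) := by
  intro x ⟨hax, hxm⟩ y ⟨_, hym⟩ hxy
  have hx : x ∈ Ioo a b := ⟨hax, by linarith⟩
  have hx' : a + b - x ∈ Ioo a b := ⟨by linarith, by linarith⟩
  have hseg : y ∈ openSegment ℝ x (a + b - x) := by
    rw [openSegment_eq_Ioo (by linarith)]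
    exact ⟨hxy, by linarith⟩
  simpa [hsymm x hx] using hf.lt_on_openSegment hx hx' (by linarith) hseg

lemma StrictConvexOn.strictMonoOn_of_symmetric {f : ℝ → ℝ} {a b : ℝ}
    (hf : StrictConvexOn ℝ (Ioo a b) f) (hsymm : ∀ x ∈ Ioo a b, f (a + b - x) = f x) :
    StrictMonoOn f (Ico ((a + b) / 2) b) := by
  intro x ⟨hmx, _⟩ y ⟨_, hyb⟩ hxy
  have hy : y ∈ Ioo a b := ⟨by linarith, hyb⟩
  have hy' : a + b - y ∈ Ioo a b := ⟨by linarith, by linarith⟩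
  have hseg : x ∈ openSegment ℝ (a + b - y) y := by
    rw [openSegment_eq_Ioo (by linarith)]
    exact ⟨by linarith, hxy⟩
  simpa [hsymm y hy] using hf.lt_on_openSegment hy' hy (by linarith) hseg

lemma strictConcaveOn_digamma_one_add_add (c : ℝ) :
    StrictConcaveOn ℝ (Ioo (-1) (c + 1)) fun x => digamma (1 + x) + digamma (1 + (c - x)) := by
  refine ⟨convex_Ioo _ _, fun x hx y hy hxy a b ha hb hab => ?_⟩
  have hleft := strictConcaveOn_digamma.2 (x := 1 + x) (y := 1 + y)
    (by simp only [mem_Ioi]; linarith [hx.1]) (by simp only [mem_Ioi]; linarith [hy.1])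
    (by simpa using hxy) ha hb hab
  have hright := strictConcaveOn_digamma.2 (x := 1 + (c - x)) (y := 1 + (c - y))
    (by simp only [mem_Ioi]; linarith [hx.2]) (by simp only [mem_Ioi]; linarith [hy.2])
    (by simpa using hxy) ha hb hab
  have hl : a • (1 + x) + b • (1 + y) = 1 + (a • x + b • y) := by
    simp only [smul_eq_mul]; linear_combination hab
  have hr : a • (1 + (c - x)) + b • (1 + (c - y)) = 1 + (c - (a • x + b • y)) := by
    simp only [smul_eq_mul]; linear_combination (1 + c) * hab
  rw [hl] at hleft
  rw [hr] at hright
  simp only [smul_eq_mul] at hleft hright ⊢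
  linarith

lemma Rc_sub_div_eq {c x : ℝ} (hx : 0 < x) (hxc : x < c) :
    Rc c x - c / (x * (c - x)) =
      -(digamma (1 + x) + digamma (1 + (c - x))) - 2 * eulerMascheroniConstant := by
  have hcx : 0 < c - x := by linarith
  rw [Rc, add_comm 1 x, add_comm 1 (c - x), digamma_add_one hx, digamma_add_one hcx]
  field_simp
  ring

lemma tendsto_Rc_sub_div {c x : ℝ} (hx : x ∈ Icc 0 c) :
    Tendsto (fun x => Rc c x - c / (x * (c - x))) (𝓝[Ioo 0 c] x)
      (𝓝 (-(digamma (1 + x) + digamma (1 + (c - x))) - 2 * eulerMascheroniConstant)) := by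
  have hleft : ContinuousAt (fun x => digamma (1 + x)) x :=
    (continuousAt_digamma (by linarith [hx.1] : 0 < 1 + x)).comp (by fun_prop)
  have hright : ContinuousAt (fun x => digamma (1 + (c - x))) x :=
    (continuousAt_digamma (by linarith [hx.2] : 0 < 1 + (c - x))).comp
      (f := fun x => 1 + (c - x)) (by fun_prop)
  have hcont := hleft.add hright
  refine ((hcont.neg.sub continuousAt_const).tendsto.mono_left nhdsWithin_le_nhds).congr' ?_
  exact eventuallyEq_nhdsWithin_of_eqOn fun y hy => (Rc_sub_div_eq hy.1 hy.2).symm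

theorem stmt_15 (c : ℝ) (hc : 0 < c) :
    StrictAntiOn (fun x => Rc c x - c / (x * (c - x))) (Set.Ioo 0 (c / 2)) ∧
      StrictMonoOn (fun x => Rc c x - c / (x * (c - x))) (Set.Ioo (c / 2) c) ∧
      Filter.Tendsto (fun x => Rc c x - c / (x * (c - x))) (nhdsWithin 0 (Set.Ioi 0))
        (nhds (-digamma (1 + c) - Real.eulerMascheroniConstant)) ∧
      Filter.Tendsto (fun x => Rc c x - c / (x * (c - x))) (nhdsWithin c (Set.Iio c))
        (nhds (-digamma (1 + c) - Real.eulerMascheroniConstant)) ∧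
      Rc c (c / 2) - c / ((c / 2) * (c - c / 2)) =
        -2 * digamma (c / 2) - 2 * Real.eulerMascheroniConstant - 4 / c := by
  set f := fun x => Rc c x - c / (x * (c - x))
  have hconv : StrictConvexOn ℝ (Ioo 0 c) f := by
    refine (((strictConcaveOn_digamma_one_add_add c).subset
      (Ioo_subset_Ioo (by norm_num) (by linarith)) (convex_Ioo 0 c)).neg.add_const
      (-2 * eulerMascheroniConstant)).congr fun x hx => ?_
    simp only [f, Rc_sub_div_eq hx.1 hx.2, Pi.add_apply, Pi.neg_apply]
    ring
  have hsymm : ∀ x ∈ Ioo 0 c, f (0 + c - x) = f x := fun x _ => by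
    simp only [f, Rc, zero_add, sub_sub_cancel]
    ring
  have hmid : (0 + c) / 2 = c / 2 := by rw [zero_add]
  refine ⟨?_, ?_, ?_, ?_, ?_⟩
  · exact (hconv.strictAntiOn_of_symmetric hsymm).mono (hmid ▸ Ioo_subset_Ioc_self)
  · exact (hconv.strictMonoOn_of_symmetric hsymm).mono (hmid ▸ Ioo_subset_Ico_self)
  · rw [← nhdsWithin_Ioo_eq_nhdsGT hc]
    convert tendsto_Rc_sub_div (left_mem_Icc.2 hc.le) using 2
    rw [add_zero, sub_zero, digamma_one]
    ring
  · rw [← nhdsWithin_Ioo_eq_nhdsLT hc]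
    convert tendsto_Rc_sub_div (right_mem_Icc.2 hc.le) using 2
    rw [sub_self, add_zero, digamma_one]
    ring
  · rw [Rc, sub_half]
    field_simp
    ring
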